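/- Let n be a positive integer, let i be an integer with 1 ≤ i ≤ ⌈n/2⌉, let c > 4 be a real number, and let t be an integer with max{n, n²/c} ≤ t ≤ n²/4 and t ≡ n − i (mod 2). Then Pr_i^t[MAX(w) = n and w(t) = n] ≥ e^{−1−c}/n², where e is Euler's number. -/

import Mathlib

/-- A 1D walk of length `t` started at `i`: a function on `{0,…,t}` starting at `i`
whose consecutive values differ by exactly `1`. -/
def IsWalk (i : ℤ) (t : ℕ) (w : Fin (t + 1) → ℤ) : Prop :=
  w 0 = i ∧ ∀ j : Fin t, |w j.succ - w j.castSucc| = 1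

/-- The number of walks of length `t` started at `i` satisfying `P`. -/
noncomputable def walkCount (i : ℤ) (t : ℕ) (P : (Fin (t + 1) → ℤ) → Prop) : ℕ :=
  {w : Fin (t + 1) → ℤ | IsWalk i t w ∧ P w}.ncard

/-- `Pr_i^t[P]`: the number of walks of length `t` started at `i` satisfying `P`,
divided by `2 ^ t`. -/
noncomputable def walkProb (i : ℤ) (t : ℕ) (P : (Fin (t + 1) → ℤ) → Prop) : ℝ :=
  (walkCount i t P : ℝ) / 2 ^ t

/-- `w(t) = n`. -/
def endsAt {t : ℕ} (n : ℤ) (w : Fin (t + 1) → ℤ) : Prop := w (Fin.last t) = n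

/-- `MAX(w) = n`. -/
def maxEq {t : ℕ} (n : ℤ) (w : Fin (t + 1) → ℤ) : Prop :=
  (∀ j, w j ≤ n) ∧ ∃ j, w j = n

/-- `MIN(w) ≥ m`. -/
def minGE {t : ℕ} (m : ℤ) (w : Fin (t + 1) → ℤ) : Prop := ∀ j, m ≤ w j

/-!
Let `d = n - i`. A walk from `i` that stays `≤ n` and ends at `n` makes `k = (t + d)/2` up-steps,
and by the recursion on its first step these walks number `C(t, k) - C(t, k + 1) =
C(t, k) (d + 1) / (k + 1)` (the ballot numbers). Stirling's bounds on the three factorials, together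
with `x ≤ e^(x - 1)` applied to `2k/t` and `2(t - k)/t`, give the local limit estimate
`C(t, k) ≥ 4 · 2^t e^(-d²/t) / (e² √t)`. Finally `d²/t ≤ n²/t ≤ c`, `√t ≤ n/2`, `k + 1 ≤ t ≤ n²/4`
and `d + 1 ≥ n/2` turn this into `e^(-1-c)/n²`.
-/

open Real Nat

theorem Stirling.factorial_le_stirling {n : ℕ} (hn : n ≠ 0) :
    (n ! : ℝ) ≤ exp 1 * √n * (n / exp 1) ^ n := by
  obtain ⟨m, rfl⟩ : ∃ m, n = m + 1 := ⟨n - 1, by omega⟩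
  have h : Stirling.stirlingSeq (m + 1) ≤ exp 1 / √2 := by
    simpa [Stirling.stirlingSeq_one] using Stirling.stirlingSeq'_antitone (Nat.zero_le m)
  rw [Stirling.stirlingSeq, div_le_div_iff₀ (by positivity) (by positivity),
    sqrt_mul zero_le_two] at h
  have : 0 < √2 := by positivity
  nlinarith

theorem pow_le_pow_mul_exp {x s : ℝ} (hx : 0 ≤ x) (hs : 0 < s) (m : ℕ) :
    x ^ m ≤ s ^ m * exp (m * (x / s - 1)) := by
  have h : x / s ≤ exp (x / s - 1) := by linarith [add_one_le_exp (x / s - 1)]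
  calc x ^ m = s ^ m * (x / s) ^ m := by rw [← mul_pow, mul_div_cancel₀ _ hs.ne']
    _ ≤ s ^ m * exp (x / s - 1) ^ m := by gcongr
    _ = s ^ m * exp (m * (x / s - 1)) := by rw [exp_nat_mul]

theorem pow_mul_pow_le_half_pow_mul_exp {k j : ℕ} (h : k + j ≠ 0) :
    (k : ℝ) ^ k * (j : ℝ) ^ j ≤
      (((k + j : ℕ) : ℝ) / 2) ^ (k + j) * exp ((k - j : ℝ) ^ 2 / (k + j : ℕ)) := by
  have hs : (0 : ℝ) < ((k + j : ℕ) : ℝ) / 2 := by positivity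
  calc (k : ℝ) ^ k * (j : ℝ) ^ j
      ≤ (((k + j : ℕ) : ℝ) / 2) ^ k * exp (k * (k / (((k + j : ℕ) : ℝ) / 2) - 1)) *
        ((((k + j : ℕ) : ℝ) / 2) ^ j * exp (j * (j / (((k + j : ℕ) : ℝ) / 2) - 1))) := by
        gcongr <;> exact pow_le_pow_mul_exp (by positivity) hs _
    _ = _ := by
        rw [pow_add, mul_mul_mul_comm, ← exp_add]
        congr 2
        have : (0 : ℝ) < k + j := by exact_mod_cast Nat.pos_of_ne_zero h
        push_cast
        field_simp
        ring

theorem factorial_mul_factorial_le {k j : ℕ} (hk : k ≠ 0) (hj : j ≠ 0) :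
    (k ! * j ! : ℝ) ≤ exp 1 ^ 2 * ((k + j : ℕ) / 2) *
      (((k + j : ℕ) / 2) ^ (k + j) * exp ((k - j : ℝ) ^ 2 / (k + j : ℕ))) / exp 1 ^ (k + j) := by
  have hsqrt : √k * √j ≤ (k + j : ℕ) / 2 := by
    have := sq_nonneg (√k - √j)
    rw [sub_sq, sq_sqrt k.cast_nonneg, sq_sqrt j.cast_nonneg] at this
    push_cast
    linarith
  calc (k ! * j ! : ℝ) ≤ (exp 1 * √k * (k / exp 1) ^ k) * (exp 1 * √j * (j / exp 1) ^ j) := by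
        gcongr <;> exact Stirling.factorial_le_stirling ‹_›
    _ = exp 1 ^ 2 * (√k * √j) * ((k : ℝ) ^ k * (j : ℝ) ^ j) / exp 1 ^ (k + j) := by
        rw [div_pow, div_pow, pow_add]
        field_simp
    _ ≤ _ := by
        gcongr exp 1 ^ 2 * ?_ * ?_ / _
        exact pow_mul_pow_le_half_pow_mul_exp (by omega)

theorem two_pow_mul_exp_le_choose {k j : ℕ} (hk : k ≠ 0) (hj : j ≠ 0) :
    4 / (exp 1 ^ 2 * √(k + j : ℕ)) * 2 ^ (k + j) * exp (-(k - j : ℝ) ^ 2 / (k + j : ℕ)) ≤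
      ((k + j).choose k : ℝ) := by
  have hfac : ((k + j).choose k : ℝ) * (k ! * j !) = (k + j) ! := by
    have := add_choose_mul_factorial_mul_factorial j k
    rw [add_comm j k, mul_assoc, mul_comm (j !)] at this
    exact_mod_cast this
  set t := k + j
  have ht : (0 : ℝ) < t := by positivity
  have hlower : 2 * √t * (t / exp 1) ^ t ≤ t ! := by
    refine le_trans ?_ (Stirling.le_factorial_stirling t)
    gcongr
    rw [show (2 : ℝ) * √t = √(2 ^ 2 * t) by simp [sqrt_mul]]
    gcongr
    nlinarith [pi_gt_three]
  rw [← mul_le_mul_iff_of_pos_right (by positivity : (0 : ℝ) < k ! * j !), hfac]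
  refine le_trans ?_ hlower
  calc _ ≤ 4 / (exp 1 ^ 2 * √t) * 2 ^ t * exp (-(k - j : ℝ) ^ 2 / t) *
          (exp 1 ^ 2 * (t / 2) * ((t / 2) ^ t * exp ((k - j : ℝ) ^ 2 / t)) / exp 1 ^ t) := by
        gcongr
        exact factorial_mul_factorial_le hk hj
    _ = 2 * √t * (t / exp 1) ^ t := by
        rw [neg_div, exp_neg, div_pow, div_pow]
        field_simp
        rw [sq_sqrt ht.le]
        ring

theorem choose_sub_choose_succ (k j : ℕ) :
    ((k + j).choose k : ℝ) - (k + j).choose (k + 1) =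
      (k + j).choose k * (k - j + 1) / (k + 1) := by
  have h := choose_succ_right_eq (k + j) k
  rw [Nat.add_sub_cancel_left] at h
  have h' : ((k + j).choose (k + 1) : ℝ) * (k + 1) = (k + j).choose k * j := by exact_mod_cast h
  field_simp
  linear_combination -h'

/-- The number of ±1 paths of length `t` from height `d` to height `0` that never go below `0`;
a walk staying `≤ n` is such a path in the coordinate `n - w j`. -/
def pathsToZero : ℕ → ℕ → ℕ
  | 0, 0 => 1
  | 0, _ + 1 => 0
  | t + 1, 0 => pathsToZero t 1
  | t + 1, d + 1 => pathsToZero t d + pathsToZero t (d + 2)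

theorem pathsToZero_add_choose {t d : ℕ} (h : t % 2 = d % 2) :
    pathsToZero t d + t.choose ((t + d) / 2 + 1) = t.choose ((t + d) / 2) := by
  induction t generalizing d with
  | zero =>
    rcases d with _ | d
    · simp [pathsToZero]
    · rw [pathsToZero, choose_eq_zero_of_lt (by omega), choose_eq_zero_of_lt (by omega)]
  | succ t ih =>
    obtain ⟨m, hm⟩ : ∃ m, (t + 1 + d) / 2 = m + 1 := ⟨(t + 1 + d) / 2 - 1, by omega⟩
    rw [hm, choose_succ_succ', choose_succ_succ']
    rcases d with _ | d
    · have h1 := ih (d := 1) (by omega)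
      rw [show (t + 1) / 2 = m + 1 by omega] at h1
      have hsymm : t.choose m = t.choose (m + 1) := choose_symm_of_eq_add (by omega)
      rw [pathsToZero]
      omega
    · have h1 := ih (d := d) (by omega)
      have h2 := ih (d := d + 2) (by omega)
      rw [show (t + d) / 2 = m by omega] at h1
      rw [show (t + (d + 2)) / 2 = m + 1 by omega] at h2
      rw [pathsToZero]
      omega

def walksToCeiling (n i : ℤ) (t : ℕ) : Set (Fin (t + 1) → ℤ) :=
  {w | IsWalk i t w ∧ (∀ j, w j ≤ n) ∧ endsAt n w}

theorem isWalk_cons_iff {i a : ℤ} {t : ℕ} {v : Fin (t + 1) → ℤ} :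
    IsWalk i (t + 1) (Fin.cons a v) ↔ a = i ∧ |v 0 - a| = 1 ∧ IsWalk (v 0) t v := by
  simp only [IsWalk, Fin.forall_fin_succ, Fin.cons_zero, Fin.castSucc_zero, Fin.cons_succ,
    ← Fin.succ_castSucc, true_and]

theorem cons_mem_walksToCeiling_iff {n i a : ℤ} {t : ℕ} {v : Fin (t + 1) → ℤ} :
    Fin.cons a v ∈ walksToCeiling n i (t + 1) ↔
      a = i ∧ a ≤ n ∧ |v 0 - a| = 1 ∧ v ∈ walksToCeiling n (v 0) t := by
  simp only [walksToCeiling, Set.mem_ofPred_eq, isWalk_cons_iff, Fin.forall_fin_succ,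
    Fin.cons_zero, Fin.cons_succ, endsAt, ← Fin.succ_last]
  tauto

theorem walksToCeiling_eq_empty {n i : ℤ} {t : ℕ} (h : n < i) : walksToCeiling n i t = ∅ := by
  ext w
  simp only [walksToCeiling, Set.mem_ofPred_eq, Set.mem_empty_iff_false, iff_false]
  rintro ⟨⟨h0, -⟩, hle, -⟩
  exact absurd (hle 0) (by omega)

theorem walksToCeiling_succ {n i : ℤ} {t : ℕ} (hi : i ≤ n) :
    walksToCeiling n i (t + 1) =
      Fin.cons i '' (walksToCeiling n (i + 1) t ∪ walksToCeiling n (i - 1) t) := by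
  ext w
  obtain ⟨a, v, rfl⟩ : ∃ a v, w = Fin.cons a v := ⟨w 0, Fin.tail w, (Fin.cons_self_tail w).symm⟩
  have start {x : ℤ} : v ∈ walksToCeiling n x t ↔ v 0 = x ∧ v ∈ walksToCeiling n (v 0) t :=
    ⟨fun h => ⟨h.1.1, h.1.1 ▸ h⟩, fun ⟨h, hv⟩ => h ▸ hv⟩
  simp only [cons_mem_walksToCeiling_iff, Set.mem_image, Set.mem_union, Fin.cons_inj]
  constructor
  · rintro ⟨rfl, -, hstep, hv⟩
    refine ⟨v, ?_, rfl, rfl⟩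
    rcases abs_eq zero_le_one |>.mp hstep with h | h
    · exact .inl (start.2 ⟨by omega, hv⟩)
    · exact .inr (start.2 ⟨by omega, hv⟩)
  · rintro ⟨v, hv, rfl, rfl⟩
    rcases hv with hv | hv <;>
      obtain ⟨h, hv⟩ := start.1 hv <;> exact ⟨rfl, hi, by simp [h], hv⟩

theorem encard_walksToCeiling {n i : ℤ} {t d : ℕ} (h : i + d = n) :
    (walksToCeiling n i t).encard = pathsToZero t d := by
  induction t generalizing i d with
  | zero =>
    rcases d with _ | d
    · rw [pathsToZero, Nat.cast_one, Set.encard_eq_one]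
      refine ⟨fun _ => n, Set.ext fun w => ?_⟩
      simp only [walksToCeiling, IsWalk, endsAt, Set.mem_ofPred_eq, Set.mem_singleton_iff,
        funext_iff, IsEmpty.forall_iff, and_true]
      constructor
      · rintro ⟨h0, -, -⟩ j
        rw [Subsingleton.elim (α := Fin 1) j 0, h0]
        omega
      · intro hw
        exact ⟨by rw [hw]; omega, fun j => (hw j).le, hw _⟩
    · rw [pathsToZero, Nat.cast_zero, Set.encard_eq_zero, Set.eq_empty_iff_forall_notMem]
      rintro w ⟨⟨h0, -⟩, -, hend⟩
      have : w 0 = n := hend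
      omega
  | succ t ih =>
    have hdisj : Disjoint (walksToCeiling n (i + 1) t) (walksToCeiling n (i - 1) t) :=
      Set.disjoint_left.2 fun v hv hv' => by have := hv.1.1.symm.trans hv'.1.1; omega
    rw [walksToCeiling_succ (by omega), (Fin.cons_right_injective _).encard_image,
      Set.encard_union_eq hdisj]
    rcases d with _ | d
    · rw [walksToCeiling_eq_empty (by omega), Set.encard_empty, zero_add, ih (d := 1) (by omega),
        pathsToZero]
    · rw [ih (d := d) (by omega), ih (d := d + 2) (by omega), pathsToZero, Nat.cast_add]

theorem maxEq_and_endsAt_iff {t : ℕ} {n : ℤ} {w : Fin (t + 1) → ℤ} :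
    maxEq n w ∧ endsAt n w ↔ (∀ j, w j ≤ n) ∧ endsAt n w :=
  ⟨fun ⟨⟨hle, _⟩, hend⟩ => ⟨hle, hend⟩, fun ⟨hle, hend⟩ => ⟨⟨hle, _, hend⟩, hend⟩⟩

theorem walkCount_maxEq_endsAt {n i : ℤ} {t d : ℕ} (h : i + d = n) :
    walkCount i t (fun w => maxEq n w ∧ endsAt n w) = pathsToZero t d := by
  have hset : {w | IsWalk i t w ∧ maxEq n w ∧ endsAt n w} = walksToCeiling n i t := by
    ext w
    simp only [walksToCeiling, Set.mem_ofPred_eq, maxEq_and_endsAt_iff]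
  rw [walkCount, hset, Set.ncard_def, encard_walksToCeiling h, ENat.toNat_natCast]

theorem walkProb_maxEq_endsAt {n i : ℤ} {k j : ℕ} (h : i + k = n + j) (hjk : j ≤ k) :
    walkProb i (k + j) (fun w => maxEq n w ∧ endsAt n w) =
      (k + j).choose k * (k - j + 1) / (k + 1) / 2 ^ (k + j) := by
  have hpaths := pathsToZero_add_choose (t := k + j) (d := k - j) (by omega)
  rw [show (k + j + (k - j)) / 2 = k by omega] at hpaths
  rw [walkProb, walkCount_maxEq_endsAt (d := k - j) (by omega), ← choose_sub_choose_succ,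
    ← hpaths]
  push_cast
  ring

theorem walkProb_maxEq_endsAt_ge {n i : ℤ} {k j : ℕ} (h : i + k = n + j) (hj : j ≠ 0)
    (hjk : j ≤ k) :
    4 * (k - j + 1) / (exp 1 ^ 2 * √(k + j : ℕ) * (k + 1)) *
        exp (-(k - j : ℝ) ^ 2 / (k + j : ℕ)) ≤
      walkProb i (k + j) (fun w => maxEq n w ∧ endsAt n w) := by
  rw [walkProb_maxEq_endsAt h hjk]
  have hkj : (0 : ℝ) ≤ k - j + 1 := by linarith [(Nat.cast_le (α := ℝ)).2 hjk]
  calc _ = 4 / (exp 1 ^ 2 * √(k + j : ℕ)) * 2 ^ (k + j) *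
        exp (-(k - j : ℝ) ^ 2 / (k + j : ℕ)) * (k - j + 1) / (k + 1) / 2 ^ (k + j) := by
        field_simp
    _ ≤ _ := by
        gcongr
        exact two_pow_mul_exp_le_choose (by omega) hj

theorem exp_neg_one_sub_div_sq_le {n d k t c : ℝ} (hn : 4 ≤ n) (hdn : n ≤ 2 * (d + 1))
    (hdn' : d ≤ n) (hk : 0 < k) (hkt : k ≤ t) (ht : t ≤ n ^ 2 / 4) (hnc : n ^ 2 ≤ c * t) :
    exp (-1 - c) / n ^ 2 ≤ 4 * (d + 1) / (exp 1 ^ 2 * √t * k) * exp (-d ^ 2 / t) := by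
  have ht0 : 0 < t := hk.trans_le hkt
  have hsqrt : √t ≤ n / 2 := Real.sqrt_le_iff.2 ⟨by positivity, by linarith⟩
  have hexp : exp (-c) ≤ exp (-d ^ 2 / t) := by
    rw [exp_le_exp, neg_div, neg_le_neg_iff, div_le_iff₀ ht0]
    nlinarith
  have hpoly : exp 1 * √t * k ≤ 4 * (d + 1) * n ^ 2 :=
    calc exp 1 * √t * k ≤ 3 * (n / 2) * (n ^ 2 / 4) := by
          gcongr
          · linarith [exp_one_lt_d9]
          · linarith
      _ ≤ 4 * (d + 1) * n ^ 2 := by nlinarith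
  calc exp (-1 - c) / n ^ 2 = exp (-c) * (exp 1 / (exp 1 ^ 2 * n ^ 2)) := by
        rw [sub_eq_add_neg, exp_add, exp_neg]
        field_simp
    _ ≤ exp (-d ^ 2 / t) * (4 * (d + 1) / (exp 1 ^ 2 * √t * k)) := by
        refine mul_le_mul hexp ?_ (by positivity) (exp_pos _).le
        rw [div_le_div_iff₀ (by positivity) (by positivity)]
        nlinarith [exp_pos 1]
    _ = _ := by ring

theorem walkProb_max_end_lower_general (n i t : ℕ) (c : ℝ)
    (hi1 : 1 ≤ i) (hi2 : i ≤ (n + 1) / 2) (hc : 4 < c)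
    (ht1 : max ((n : ℝ)) ((n : ℝ) ^ 2 / c) ≤ (t : ℝ)) (ht2 : (t : ℝ) ≤ (n : ℝ) ^ 2 / 4)
    (hpar : (t : ℤ) % 2 = ((n : ℤ) - (i : ℤ)) % 2) :
    walkProb (i : ℤ) t (fun w => maxEq (n : ℤ) w ∧ endsAt (n : ℤ) w) ≥
      Real.exp (-1 - c) / (n : ℝ) ^ 2 := by
  have htn : (n : ℝ) ≤ t := le_of_max_le_left ht1
  have hnc : (n : ℝ) ^ 2 ≤ c * t := (div_le_iff₀' (by linarith)).1 (le_of_max_le_right ht1)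
  have hn : (4 : ℝ) ≤ n := by
    have : (0 : ℝ) < n := by exact_mod_cast (show 0 < n by omega)
    nlinarith
  obtain ⟨j, hj, rfl⟩ : ∃ j, j ≠ 0 ∧ t = (j + (n - i)) + j := by
    have : n ≤ t := by exact_mod_cast htn
    exact ⟨(t - (n - i)) / 2, by omega, by omega⟩
  set d := n - i
  have hdn : (n : ℝ) ≤ 2 * (d + 1) := by exact_mod_cast (show n ≤ 2 * (d + 1) by omega)
  have hdn' : (d : ℝ) ≤ n := by exact_mod_cast (show d ≤ n by omega)
  have hj1 : (1 : ℝ) ≤ j := by exact_mod_cast Nat.one_le_iff_ne_zero.2 hj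
  refine le_trans ?_ (walkProb_maxEq_endsAt_ge (by push_cast; omega) hj (by omega))
  push_cast at hnc ht2 ⊢
  rw [add_sub_cancel_left]
  exact exp_neg_one_sub_div_sq_le hn hdn hdn' (by positivity) (by linarith) ht2 hnc

/-- For a positive integer `n`, an integer `1 ≤ i ≤ ⌈n/2⌉`, a real
`c > 4`, and an integer `t` with `max {n, n²/c} ≤ t ≤ n²/4` and `t ≡ n - i (mod 2)`,
`Pr_i^t[MAX(w) = n, w(t) = n] ≥ e^{-1-c} / n²`. -/
theorem walkProb_max_end_lower (n i t : ℕ) (c : ℝ) (hn : 0 < n)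
    (hi1 : 1 ≤ i) (hi2 : i ≤ (n + 1) / 2) (hc : 4 < c)
    (ht1 : max ((n : ℝ)) ((n : ℝ) ^ 2 / c) ≤ (t : ℝ)) (ht2 : (t : ℝ) ≤ (n : ℝ) ^ 2 / 4)
    (hpar : (t : ℤ) % 2 = ((n : ℤ) - (i : ℤ)) % 2) :
    walkProb (i : ℤ) t (fun w => maxEq (n : ℤ) w ∧ endsAt (n : ℤ) w) ≥
      Real.exp (-1 - c) / (n : ℝ) ^ 2 :=
  walkProb_max_end_lower_general n i t c hi1 hi2 hc ht1 ht2 hpar
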